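/- For every even m ≥ 2, the graph K_{2m} ∪ K_{m,m−1,m−1} on 5m−2 vertices and its complement both fail to contain the kipas K̂_{2m+1} = K_1 + P_{2m} as a subgraph; hence R(K̂_{2m+1}, K̂_{2m+1}) ≥ 5m − 1 for even m. -/

import Mathlib

open SimpleGraph

/-- `H` is contained in `G` as a subgraph. -/
def Contains {α β : Type*} (G : SimpleGraph α) (H : SimpleGraph β) : Prop :=
  ∃ f : H →g G, Function.Injective f

/-- Every red/blue coloring of `K_N` (red = `C`, blue = `Cᶜ`) has a red `G` or blue `H`. -/
def RamseyProp {α β : Type*} (N : ℕ) (G : SimpleGraph α) (H : SimpleGraph β) : Prop :=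
  ∀ C : SimpleGraph (Fin N), Contains C G ∨ Contains Cᶜ H

/-- The Ramsey number `R(G, H)`. -/
noncomputable def ramseyNumber {α β : Type*} (G : SimpleGraph α) (H : SimpleGraph β) : ℕ :=
  sInf {N | RamseyProp N G H}

/-- The join `G + H`: disjoint union plus all edges in between. -/
def graphJoin {α β : Type*} (G : SimpleGraph α) (H : SimpleGraph β) : SimpleGraph (α ⊕ β) :=
  SimpleGraph.fromRel (fun x y =>
    match x, y with
    | Sum.inl a, Sum.inl b => G.Adj a b
    | Sum.inr a, Sum.inr b => H.Adj a b
    | _, _ => True)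

/-- The wheel `W_n = K_1 + C_{n-1}` on `n` vertices. -/
def wheel (n : ℕ) : SimpleGraph (Fin 1 ⊕ Fin (n - 1)) :=
  graphJoin ⊥ (SimpleGraph.cycleGraph (n - 1))

/-- A perfect matching `k • K_2` on `2k` vertices. -/
def matching (k : ℕ) : SimpleGraph (Fin k × Fin 2) :=
  SimpleGraph.fromRel (fun x y => x.1 = y.1)

/-- The fan `F_k = K_1 + k • K_2`. -/
def fan (k : ℕ) : SimpleGraph (Fin 1 ⊕ Fin k × Fin 2) :=
  graphJoin ⊥ (matching k)

/-- The kipas `K̂_n = K_1 + P_{n-1}` on `n` vertices. -/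
def kipas (n : ℕ) : SimpleGraph (Fin 1 ⊕ Fin (n - 1)) :=
  graphJoin ⊥ (SimpleGraph.pathGraph (n - 1))

/-- The blow-up `G[K_2]`: each vertex replaced by an adjacent pair; vertices in
different pairs adjacent iff the original vertices are adjacent. -/
def blowUp {α : Type*} (G : SimpleGraph α) : SimpleGraph (α × Fin 2) :=
  SimpleGraph.fromRel (fun x y => x.1 = y.1 ∨ G.Adj x.1 y.1)


/-- The disjoint union of two graphs. -/
def disjUnion {α β : Type*} (G : SimpleGraph α) (H : SimpleGraph β) :
    SimpleGraph (α ⊕ β) :=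
  SimpleGraph.fromRel (fun x y =>
    match x, y with
    | Sum.inl a, Sum.inl b => G.Adj a b
    | Sum.inr a, Sum.inr b => H.Adj a b
    | _, _ => False)

/-- The graph K_{2m} ∪ K_{m,m-1,m-1}. -/
def G13 (m : ℕ) : SimpleGraph (Fin (2 * m) ⊕ (Σ i : Fin 3, Fin (![m, m - 1, m - 1] i))) :=
  disjUnion (⊤ : SimpleGraph (Fin (2 * m)))
    (completeMultipartiteGraph (fun i : Fin 3 => Fin (![m, m - 1, m - 1] i)))


/-!
Every vertex of `K_{2m} ∪ K_{m,m-1,m-1}` has degree at most `2m - 1`, while the hub of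
`K̂_{2m+1}` has degree `2m`. In the complement, the `2m` vertices of `K_{2m}` form an independent
set joined to every other vertex, and the remaining vertices span `K_m ∪ K_{m-1} ∪ K_{m-1}`.
A hub in the independent set forces the rim path, which is connected, into a single one of these
cliques, which has at most `m` vertices. A hub in a part `P` forces the rim into the independent
set together with `P` minus the hub; but at most `m` vertices of a path on `2m` vertices lie in an
independent set, and `P` minus the hub has at most `m - 1` vertices.

The graph has `5m - 2` vertices, whence the Ramsey bound. Since `ramseyNumber` is an `sInf`, it
also needs the Ramsey numbers to be finite, which the Erdős–Szekeres bound provides.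
-/

theorem contains_iff_isContained {α β : Type*} {G : SimpleGraph α} {H : SimpleGraph β} :
    Contains G H ↔ H ⊑ G :=
  ⟨fun ⟨f, hf⟩ => ⟨f.toCopy hf⟩, fun ⟨f⟩ => ⟨f.toHom, f.injective⟩⟩

theorem disjUnion_eq_sum {α β : Type*} (G : SimpleGraph α) (H : SimpleGraph β) :
    disjUnion G H = G ⊕g H := by
  ext (a | a) (b | b) <;> simp [disjUnion, adj_comm, fromRel_adj] <;> exact ne_of_adj _

namespace SimpleGraph

section Path

variable {V : Type*}

theorem Preconnected.eq_of_forall_adj {α : Type*} {G : SimpleGraph V} (hG : G.Preconnected)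
    {g : V → α} (hg : ∀ u v, G.Adj u v → g u = g v) (u v : V) : g u = g v := by
  obtain ⟨w⟩ := hG u v
  induction w with
  | nil => rfl
  | cons h _ ih => exact (hg _ _ h).trans ih

theorem card_le_of_isIndepSet_pathGraph {n : ℕ} {s : Finset (Fin n)}
    (hs : (pathGraph n).IsIndepSet s) : s.card ≤ (n + 1) / 2 := by
  -- `s` contains no two consecutive vertices, so `j ↦ j / 2` is injective on it
  calc s.card ≤ (Finset.range ((n + 1) / 2)).card := by
        refine Finset.card_le_card_of_injOn (fun j => j.val / 2) (fun j _ => ?_) ?_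
        · simp only [Finset.coe_range, Set.mem_Iio]
          omega
        · intro i hi j hj hij
          by_contra hne
          refine hs hi hj hne (pathGraph_adj.mpr ?_)
          have : i.val ≠ j.val := Fin.val_ne_of_ne hne
          simp only at hij
          omega
    _ = (n + 1) / 2 := Finset.card_range _

end Path

section Sum

variable {V W : Type*} {G : SimpleGraph V} {H : SimpleGraph W}

theorem degree_sum_inl (v : V) [Fintype ((G ⊕g H).neighborSet (.inl v))]
    [Fintype (G.neighborSet v)] : (G ⊕g H).degree (.inl v) = G.degree v := by
  simp only [← card_neighborSet_eq_degree, ← Nat.card_eq_fintype_card, neighborSet_sum_inl,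
    Nat.card_image_of_injective Sum.inl_injective]

theorem degree_sum_inr (w : W) [Fintype ((G ⊕g H).neighborSet (.inr w))]
    [Fintype (H.neighborSet w)] : (G ⊕g H).degree (.inr w) = H.degree w := by
  simp only [← card_neighborSet_eq_degree, ← Nat.card_eq_fintype_card, neighborSet_sum_inr,
    Nat.card_image_of_injective Sum.inr_injective]

end Sum

section CompleteMultipartite

variable {ι : Type*} [Fintype ι] [DecidableEq ι] {V : ι → Type*} [∀ i, Fintype (V i)]

theorem card_filter_sigma_fst_eq (i : ι) :
    (Finset.univ.filter fun d : Σ i, V i => d.1 = i).card = Fintype.card (V i) := by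
  rw [← Fintype.card_subtype, Fintype.card_congr (Equiv.sigmaSubtype i)]

theorem degree_completeMultipartiteGraph_add_card (v : Σ i, V i)
    [Fintype ((completeMultipartiteGraph V).neighborSet v)] :
    (completeMultipartiteGraph V).degree v + Fintype.card (V v.1) =
      Fintype.card (Σ i, V i) := by
  classical
  have hN : (completeMultipartiteGraph V).neighborFinset v =
      Finset.univ.filter fun d => ¬d.1 = v.1 := by
    ext d
    simp [eq_comm]
  rw [← card_neighborFinset_eq_degree, hN, ← card_filter_sigma_fst_eq, add_comm,
    Finset.card_filter_add_card_filter_not, Finset.card_univ]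

end CompleteMultipartite

section Ramsey

variable {V β : Type*}

theorem exists_isNClique_or_isNClique_compl [DecidableEq V] (C : SimpleGraph V)
    [DecidableRel C.Adj] (s t : ℕ) (A : Finset V) (hA : (s + t).choose s ≤ A.card) :
    (∃ B ⊆ A, C.IsNClique s B) ∨ ∃ B ⊆ A, Cᶜ.IsNClique t B := by
  induction s generalizing t A with
  | zero => exact .inl ⟨∅, Finset.empty_subset _, by simp⟩
  | succ s ihs =>
    induction t generalizing A with
    | zero => exact .inr ⟨∅, Finset.empty_subset _, by simp⟩
    | succ t iht =>
      obtain ⟨v, hv⟩ : A.Nonempty :=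
        Finset.card_pos.mp ((Nat.choose_pos (by omega)).trans_le hA)
      set X := (A.erase v).filter (C.Adj v)
      set Y := (A.erase v).filter fun w => ¬C.Adj v w
      have hXA : X ⊆ A := (Finset.filter_subset _ _).trans (Finset.erase_subset _ _)
      have hYA : Y ⊆ A := (Finset.filter_subset _ _).trans (Finset.erase_subset _ _)
      have hXY : X.card + Y.card + 1 = A.card := by
        rw [Finset.card_filter_add_card_filter_not, Finset.card_erase_add_one hv]
      have hpascal : (s + 1 + (t + 1)).choose (s + 1) =
          (s + (t + 1)).choose s + (s + 1 + t).choose (s + 1) := by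
        rw [show s + 1 + (t + 1) = s + 1 + t + 1 by omega, Nat.choose_succ_succ,
          show s + 1 + t = s + (t + 1) by omega]
      by_cases hX : (s + (t + 1)).choose s ≤ X.card
      · rcases ihs (t + 1) X hX with ⟨B, hBX, hB⟩ | ⟨B, hBX, hB⟩
        · refine .inl ⟨insert v B, Finset.insert_subset hv (hBX.trans hXA),
            hB.insert fun b hb => ?_⟩
          exact (Finset.mem_filter.mp (hBX hb)).2
        · exact .inr ⟨B, hBX.trans hXA, hB⟩
      · rcases iht Y (by omega) with ⟨B, hBY, hB⟩ | ⟨B, hBY, hB⟩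
        · exact .inl ⟨B, hBY.trans hYA, hB⟩
        · refine .inr ⟨insert v B, Finset.insert_subset hv (hBY.trans hYA),
            hB.insert fun b hb => ?_⟩
          obtain ⟨hbA, hvb⟩ := Finset.mem_filter.mp (hBY hb)
          exact (compl_adj C v b).mpr ⟨(Finset.ne_of_mem_erase hbA).symm, hvb⟩

theorem IsNClique.isContained [Fintype β] {C : SimpleGraph V} {B : Finset V}
    (hB : C.IsNClique (Fintype.card β) B) (H : SimpleGraph β) : H ⊑ C :=
  IsContained.mono_left le_top (not_free.mp (cliqueFree_iff_top_free.not.mp fun h => h B hB))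

end Ramsey

end SimpleGraph

section Ramsey

variable {V β γ : Type*}

theorem ramseyProp_choose [Fintype β] [Fintype γ] (H : SimpleGraph β) (H' : SimpleGraph γ) :
    RamseyProp ((Fintype.card β + Fintype.card γ).choose (Fintype.card β)) H H' := fun C => by
  classical
  rcases exists_isNClique_or_isNClique_compl C (Fintype.card β) (Fintype.card γ) Finset.univ
    (by simp) with ⟨B, -, hB⟩ | ⟨B, -, hB⟩
  · exact .inl (contains_iff_isContained.mpr (hB.isContained H))
  · exact .inr (contains_iff_isContained.mpr (hB.isContained H'))

theorem card_lt_ramseyNumber [Fintype V] {H : SimpleGraph β} {H' : SimpleGraph γ}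
    (hR : ∃ N, RamseyProp N H H') (G : SimpleGraph V) (hG : H.Free G) (hGc : H'.Free Gᶜ) :
    Fintype.card V < ramseyNumber H H' := by
  refine Nat.lt_of_succ_le (le_csInf hR fun N hN => ?_)
  by_contra! hNV
  let e : Fin N ↪ V :=
    (Fin.castLEEmb (Nat.le_of_lt_succ hNV)).trans (Fintype.equivFin V).symm.toEmbedding
  rcases hN (G.comap e) with h | h
  · exact hG ((contains_iff_isContained.mp h).trans (Embedding.comap e G).isContained)
  · exact hGc ((contains_iff_isContained.mp h).trans
      (Embedding.comap e G).isIndContained.compl.isContained)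

end Ramsey

section Kipas

variable {V : Type*} {G : SimpleGraph V} {n : ℕ}

theorem kipas_adj_hub (j : Fin (n - 1)) : (kipas n).Adj (.inl 0) (.inr j) := by
  simp [kipas, graphJoin]

theorem le_degree_kipas_hub [Fintype ((kipas n).neighborSet (.inl 0))] :
    n - 1 ≤ (kipas n).degree (.inl 0) := by
  rw [← card_neighborSet_eq_degree]
  simpa using Fintype.card_le_of_injective (fun j => (⟨.inr j, kipas_adj_hub j⟩ :
    (kipas n).neighborSet (.inl 0))) fun i j h => Sum.inr_injective (congrArg Subtype.val h)

theorem kipas_free_of_degree_lt [G.LocallyFinite] (h : ∀ v, G.degree v < n - 1) :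
    (kipas n).Free G := by
  classical
  rintro ⟨f⟩
  exact (h _).not_ge (le_degree_kipas_hub.trans (f.degree_le _))

theorem exists_hub_of_kipas_isContained (h : kipas n ⊑ G) :
    ∃ v, ∃ p : Copy (pathGraph (n - 1)) G, ∀ j, G.Adj v (p j) := by
  obtain ⟨f⟩ := h
  refine ⟨f (.inl 0), f.comp (Hom.toCopy ⟨Sum.inr, fun {i j} hij => ?_⟩ Sum.inr_injective),
    fun j => f.toHom.map_adj (kipas_adj_hub j)⟩
  simpa [kipas, graphJoin] using ⟨hij.ne, Or.inl hij⟩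

end Kipas

section G13

variable {m k : ℕ}

theorem G13_partSize_le (i : Fin 3) : ![m, m - 1, m - 1] i ≤ m := by
  fin_cases i <;> simp

theorem G13_partSize_ge (i : Fin 3) : m - 1 ≤ ![m, m - 1, m - 1] i := by
  fin_cases i <;> simp

theorem card_filter_G13_part_le (i : Fin 3) :
    (Finset.univ.filter fun d : Σ j : Fin 3, Fin (![m, m - 1, m - 1] j) => d.1 = i).card ≤
      m := by
  rw [card_filter_sigma_fst_eq, Fintype.card_fin]
  exact G13_partSize_le i

theorem degree_G13_lt [(G13 m).LocallyFinite] (v) : (G13 m).degree v < 2 * m := by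
  classical
  -- pass through `Nat.card` to rewrite `G13 m` without the `Fintype` instance depending on it
  rw [← card_neighborSet_eq_degree, ← Nat.card_eq_fintype_card, G13, disjUnion_eq_sum,
    Nat.card_eq_fintype_card, card_neighborSet_eq_degree]
  rcases v with a | ⟨i, x⟩
  · rw [degree_sum_inl, complete_graph_degree, Fintype.card_fin]
    have := a.pos
    omega
  · rw [degree_sum_inr]
    have hdeg := degree_completeMultipartiteGraph_add_card
      (⟨i, x⟩ : Σ i : Fin 3, Fin (![m, m - 1, m - 1] i))
    simp [Fintype.card_sigma, Fin.sum_univ_three] at hdeg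
    have := G13_partSize_ge (m := m) i
    have := x.pos
    omega

theorem not_adj_compl_G13_inl (a b : Fin (2 * m)) : ¬(G13 m)ᶜ.Adj (.inl a) (.inl b) := by
  simp [G13, disjUnion_eq_sum]

theorem adj_compl_G13_inr {c d} : (G13 m)ᶜ.Adj (.inr c) (.inr d) ↔ c ≠ d ∧ c.1 = d.1 := by
  simp [G13, disjUnion_eq_sum]

theorem length_le_of_compl_G13_hub_inl (a : Fin (2 * m)) (p : Copy (pathGraph k) (G13 m)ᶜ)
    (hp : ∀ j, (G13 m)ᶜ.Adj (.inl a) (p j)) : k ≤ m := by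
  have hright : ∀ j, ∃ d, p j = .inr d := fun j => by
    rcases hpj : p j with b | d
    · exact absurd (hpj ▸ hp j) (not_adj_compl_G13_inl a b)
    · exact ⟨d, rfl⟩
  choose q hq using hright
  have hpart : ∀ i j, (q i).1 = (q j).1 := (pathGraph_preconnected k).eq_of_forall_adj
    fun i j hij => by
      have : (G13 m)ᶜ.Adj (p i) (p j) := p.toHom.map_adj hij
      rw [hq, hq, adj_compl_G13_inr] at this
      exact this.2
  rcases k with _ | k
  · exact Nat.zero_le _
  calc k + 1 = (Finset.univ.image q).card := by
        rw [Finset.card_image_of_injective _ fun i j h => p.injective (by simp [hq, h])]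
        simp
    _ ≤ (Finset.univ.filter fun d : Σ j : Fin 3, Fin (![m, m - 1, m - 1] j) =>
          d.1 = (q 0).1).card :=
        Finset.card_le_card fun d hd => by
          obtain ⟨j, -, rfl⟩ := Finset.mem_image.mp hd
          simpa using hpart j 0
    _ ≤ m := card_filter_G13_part_le _

theorem length_lt_of_compl_G13_hub_inr (c) (p : Copy (pathGraph k) (G13 m)ᶜ)
    (hp : ∀ j, (G13 m)ᶜ.Adj (.inr c) (p j)) : k < 2 * m := by
  classical
  set S := Finset.univ.filter fun j => (p j).isLeft
  have hS : S.card ≤ (k + 1) / 2 := card_le_of_isIndepSet_pathGraph fun i hi j hj _ hij => by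
    obtain ⟨a, ha⟩ := Sum.isLeft_iff.mp (Finset.mem_filter.mp hi).2
    obtain ⟨b, hb⟩ := Sum.isLeft_iff.mp (Finset.mem_filter.mp hj).2
    have : (G13 m)ᶜ.Adj (p i) (p j) := p.toHom.map_adj hij
    rw [ha, hb] at this
    exact not_adj_compl_G13_inl a b this
  set part := (Finset.univ.filter fun d : Σ j : Fin 3, Fin (![m, m - 1, m - 1] j) =>
    d.1 = c.1).map Function.Embedding.inr
  have hSc : Sᶜ.card < part.card := by
    rw [← Finset.card_image_of_injective _ p.injective]
    refine Finset.card_lt_card ((Finset.ssubset_iff_of_subset ?_).mpr ⟨.inr c, ?_, ?_⟩)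
    · intro w hw
      obtain ⟨j, hj, rfl⟩ := Finset.mem_image.mp hw
      obtain ⟨d, hd⟩ := Sum.isRight_iff.mp (by simpa [S] using hj)
      have := hp j
      rw [hd, adj_compl_G13_inr] at this
      simp [part, hd, this.2]
    · simp [part]
    · intro hc
      obtain ⟨j, -, hj⟩ := Finset.mem_image.mp hc
      exact (hp j).ne hj.symm
  have := card_filter_G13_part_le (m := m) c.1
  have := S.card_add_card_compl
  simp only [Finset.card_map, part, Fintype.card_fin] at *
  omega

theorem kipas_free_compl_G13 (m : ℕ) : (kipas (2 * m + 1)).Free (G13 m)ᶜ := by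
  intro h
  obtain ⟨v | v, p, hp⟩ := exists_hub_of_kipas_isContained h
  · have := length_le_of_compl_G13_hub_inl v p hp
    have := v.pos
    omega
  · have := length_lt_of_compl_G13_hub_inr v p hp
    omega

end G13

theorem stmt_13_general (m : ℕ) :
    ¬ Contains (G13 m) (kipas (2 * m + 1)) ∧
    ¬ Contains (G13 m)ᶜ (kipas (2 * m + 1)) ∧
    5 * m - 1 ≤ ramseyNumber (kipas (2 * m + 1)) (kipas (2 * m + 1)) := by
  classical
  have hfree : (kipas (2 * m + 1)).Free (G13 m) := kipas_free_of_degree_lt degree_G13_lt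
  have hfree' := kipas_free_compl_G13 m
  refine ⟨mt contains_iff_isContained.mp hfree, mt contains_iff_isContained.mp hfree', ?_⟩
  have hcard := card_lt_ramseyNumber ⟨_, ramseyProp_choose _ _⟩ (G13 m) hfree hfree'
  simp [Fintype.card_sigma, Fin.sum_univ_three] at hcard
  omega

theorem stmt_13 (m : ℕ) (hm : 2 ≤ m) (he : Even m) :
    ¬ Contains (G13 m) (kipas (2 * m + 1)) ∧
    ¬ Contains (G13 m)ᶜ (kipas (2 * m + 1)) ∧
    5 * m - 1 ≤ ramseyNumber (kipas (2 * m + 1)) (kipas (2 * m + 1)) :=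
  stmt_13_general m
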